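/- Let g(x) = τ - det(P^T L(x) P) with τ > 0, where L(x) is the sigmoid-weighted Laplacian of n distinct points and P has orthonormal columns orthogonal to 1_n. If g(x) = 0, then ∇g(x) ≠ 0. -/

import Mathlib

open Matrix

noncomputable def sigmoid (w y : ℝ) : ℝ := 1 / (1 + Real.exp (-w * y))

/-- Positions extracted from a stacked configuration vector. -/
noncomputable def pos {n d : ℕ} (v : EuclideanSpace ℝ (Fin n × Fin d)) (i : Fin n) :
    EuclideanSpace ℝ (Fin d) := WithLp.toLp 2 (fun k => v (i, k))

noncomputable def lap {n d : ℕ} (w ε : ℝ) (v : EuclideanSpace ℝ (Fin n × Fin d)) :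
    Matrix (Fin n) (Fin n) ℝ :=
  Matrix.diagonal
      (fun i => ∑ j, if i = j then 0 else sigmoid w (ε - ‖pos v i - pos v j‖)) -
    Matrix.of (fun i j => if i = j then 0 else sigmoid w (ε - ‖pos v i - pos v j‖))

/-!
Dilate the configuration, `x ↦ (1 + t) x`. Every distance grows, so every sigmoid weight strictly
decreases, and `d/dt M = -Pᵀ L(b) P` where `L(b)` is a Laplacian with positive weights `b`. A
Laplacian with positive off-diagonal weights is positive definite on `1⊥`, so both `M` and
`Pᵀ L(b) P` are positive definite. By Jacobi's formula the derivative of `g` along the dilation is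
`tr (adj M · Pᵀ L(b) P) = det M · tr (M⁻¹ · Pᵀ L(b) P)`, and the trace of a product of two positive
definite matrices is positive (it is the sum of the entries of their Hadamard product, which is
positive definite by Schur's theorem). Hence `∇g(x) ≠ 0`.
-/

section WeightedLaplacian

variable {ι : Type*} [Fintype ι] [DecidableEq ι]

noncomputable def weightedLap (a : ι → ι → ℝ) : Matrix ι ι ℝ :=
  diagonal (fun i => ∑ j, a i j) - of a

lemma weightedLap_neg (a : ι → ι → ℝ) : weightedLap (fun i j => -a i j) = -weightedLap a := by
  ext i j
  by_cases h : i = j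
  · simp [weightedLap, h]
    ring
  · simp [weightedLap, h]

lemma weightedLap_isHermitian {a : ι → ι → ℝ} (ha : ∀ i j, a i j = a j i) :
    (weightedLap a).IsHermitian := by
  ext i j
  by_cases h : i = j <;> simp [weightedLap, h, ha i j, eq_comm]

lemma weightedLap_mulVec_apply (a : ι → ι → ℝ) (x : ι → ℝ) (i : ι) :
    (weightedLap a *ᵥ x) i = ∑ j, a i j * (x i - x j) := by
  rw [weightedLap, sub_mulVec, Pi.sub_apply, mulVec_diagonal]
  simp [mulVec, dotProduct, mul_sub, Finset.sum_mul]

lemma dotProduct_weightedLap_mulVec {a : ι → ι → ℝ} (ha : ∀ i j, a i j = a j i) (x : ι → ℝ) :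
    x ⬝ᵥ (weightedLap a *ᵥ x) = (∑ i, ∑ j, a i j * (x i - x j) ^ 2) / 2 := by
  have hexpand : x ⬝ᵥ (weightedLap a *ᵥ x) = ∑ i, ∑ j, a i j * (x i * (x i - x j)) := by
    simp only [dotProduct, weightedLap_mulVec_apply, Finset.mul_sum]
    exact Finset.sum_congr rfl fun i _ => Finset.sum_congr rfl fun j _ => by ring
  have hswap : ∑ i, ∑ j, a i j * (x i * (x i - x j)) = ∑ i, ∑ j, a i j * (x j * (x j - x i)) := by
    rw [Finset.sum_comm]
    simp_rw [ha]
  have hsum : ∑ i, ∑ j, a i j * (x i - x j) ^ 2 =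
      ∑ i, ∑ j, a i j * (x i * (x i - x j)) + ∑ i, ∑ j, a i j * (x j * (x j - x i)) := by
    simp_rw [← Finset.sum_add_distrib]
    exact Finset.sum_congr rfl fun i _ => Finset.sum_congr rfl fun j _ => by ring
  rw [hsum, ← hswap, hexpand]
  ring

lemma dotProduct_weightedLap_mulVec_pos {a : ι → ι → ℝ} (ha : ∀ i j, a i j = a j i)
    (hpos : ∀ i j, i ≠ j → 0 < a i j) {y : ι → ℝ} (hy : y ≠ 0) (hsum : ∑ i, y i = 0) :
    0 < y ⬝ᵥ (weightedLap a *ᵥ y) := by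
  obtain ⟨i, j, hij⟩ : ∃ i j, y i ≠ y j := by
    by_contra! hconst
    obtain ⟨i, hi⟩ := Function.ne_iff.mp hy
    have : ∑ j, y j = Fintype.card ι * y i := by
      simp [← hconst i, Finset.sum_const, Finset.card_univ]
    have hcard : (Fintype.card ι : ℝ) ≠ 0 := Nat.cast_ne_zero.mpr (Fintype.card_pos_iff.mpr ⟨i⟩).ne'
    exact hi (by simpa [hsum, hcard] using this.symm)
  have hterm : ∀ k l, 0 ≤ a k l * (y k - y l) ^ 2 := by
    intro k l
    rcases eq_or_ne k l with rfl | hkl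
    · simp
    · exact mul_nonneg (hpos k l hkl).le (sq_nonneg _)
  rw [dotProduct_weightedLap_mulVec ha]
  refine half_pos (Finset.sum_pos' (fun k _ => Finset.sum_nonneg fun l _ => hterm k l)
    ⟨i, Finset.mem_univ _, Finset.sum_pos' (fun l _ => hterm i l) ⟨j, Finset.mem_univ _, ?_⟩⟩)
  exact mul_pos (hpos i j (ne_of_apply_ne y hij)) (sq_pos_of_ne_zero (sub_ne_zero.mpr hij))

lemma posDef_transpose_mul_weightedLap_mul {κ : Type*} [Fintype κ] {a : ι → ι → ℝ}
    (ha : ∀ i j, a i j = a j i) (hpos : ∀ i j, i ≠ j → 0 < a i j) {P : Matrix ι κ ℝ}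
    (hP : Function.Injective P.mulVec) (hP1 : ∀ k, ∑ i, P i k = 0) :
    (Pᵀ * weightedLap a * P).PosDef := by
  refine .of_dotProduct_mulVec_pos ?_ fun x hx => ?_
  · simpa [conjTranspose_eq_transpose_of_trivial] using
      isHermitian_conjTranspose_mul_mul P (weightedLap_isHermitian ha)
  · have hPx : P *ᵥ x ≠ 0 := fun h => hx (hP (h.trans (mulVec_zero P).symm))
    have hsum : ∑ i, (P *ᵥ x) i = 0 := by
      simp only [mulVec, dotProduct]
      rw [Finset.sum_comm]
      simp [← Finset.sum_mul, hP1]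
    have hquad : star x ⬝ᵥ (Pᵀ * weightedLap a * P) *ᵥ x =
        (P *ᵥ x) ⬝ᵥ (weightedLap a *ᵥ (P *ᵥ x)) := by
      rw [star_trivial, ← mulVec_mulVec, ← mulVec_mulVec, dotProduct_mulVec, vecMul_transpose]
    rw [hquad]
    exact dotProduct_weightedLap_mulVec_pos ha hpos hPx hsum

end WeightedLaplacian

section Determinant

variable {m : Type*} [Fintype m]

lemma trace_mul_pos_of_posDef [Nonempty m] {A B : Matrix m m ℝ} (hA : A.PosDef) (hB : B.PosDef) :
    0 < (A * B).trace := by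
  have hsum := (hA.hadamard hB).dotProduct_mulVec_pos (x := fun _ => 1) (Function.ne_iff.mpr
    ⟨Classical.arbitrary m, one_ne_zero⟩)
  have hBt : Bᵀ = B := by simpa [conjTranspose_eq_transpose_of_trivial] using hB.isHermitian.eq
  rw [← hBt, ← sum_hadamard_eq]
  simpa [dotProduct, mulVec] using hsum

lemma trace_adjugate_mul_pos_of_posDef [DecidableEq m] [Nonempty m] {A B : Matrix m m ℝ}
    (hA : A.PosDef) (hB : B.PosDef) : 0 < (adjugate A * B).trace := by
  have hadj : adjugate A = A.det • A⁻¹ := by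
    rw [inv_def, smul_smul, Ring.inverse_eq_inv', mul_inv_cancel₀ hA.det_pos.ne', one_smul]
  rw [hadj, smul_mul_assoc, trace_smul, smul_eq_mul]
  exact mul_pos hA.det_pos (trace_mul_pos_of_posDef hA.inv hB)

lemma adjugate_mul_apply_self {R : Type*} [CommRing R] [DecidableEq m] (A B : Matrix m m R)
    (i : m) : (adjugate A * B) i i =
      ∑ σ : Equiv.Perm m,
        ((Equiv.Perm.sign σ : ℤ) : R) * ((∏ j ∈ Finset.univ.erase i, A (σ j) j) * B (σ i) i) := by
  rw [mul_apply, ← dotProduct, ← mulVec, ← cramer_eq_adjugate_mulVec, cramer_apply, det_apply']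
  refine Finset.sum_congr rfl fun σ _ => ?_
  rw [← Finset.mul_prod_erase _ _ (Finset.mem_univ i), updateCol_self, mul_comm (B (σ i) i)]
  congr 2
  exact Finset.prod_congr rfl fun j hj => updateCol_ne (Finset.ne_of_mem_erase hj)

theorem HasDerivAt.matrix_det [DecidableEq m] {A : ℝ → Matrix m m ℝ} {A' : Matrix m m ℝ} {t : ℝ}
    (h : ∀ i j, HasDerivAt (fun s => A s i j) (A' i j) t) :
    HasDerivAt (fun s => (A s).det) (adjugate (A t) * A').trace t := by
  simp_rw [det_apply']
  have hperm := HasDerivAt.fun_sum (u := Finset.univ) fun (σ : Equiv.Perm m) _ =>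
    (HasDerivAt.fun_finsetProd (u := Finset.univ) fun i _ => h (σ i) i).const_mul
      ((Equiv.Perm.sign σ : ℤ) : ℝ)
  refine hperm.congr_deriv ?_
  simp only [trace, diag_apply, adjugate_mul_apply_self, smul_eq_mul, Finset.mul_sum]
  exact Finset.sum_comm

theorem DifferentiableAt.matrix_det [DecidableEq m] {E : Type*} [NormedAddCommGroup E]
    [NormedSpace ℝ E] {A : E → Matrix m m ℝ} {x : E}
    (h : ∀ i j, DifferentiableAt ℝ (fun u => A u i j) x) :
    DifferentiableAt ℝ (fun u => (A u).det) x := by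
  simp_rw [det_apply']
  fun_prop

end Determinant

section EntryDerivatives

variable {ι κ μ ν : Type*} [Fintype κ] [Fintype μ]

lemma hasDerivAt_mul_mul_apply (A : Matrix ι κ ℝ) (B : Matrix μ ν ℝ) {N : ℝ → Matrix κ μ ℝ}
    {N' : Matrix κ μ ℝ} {t : ℝ} (h : ∀ i j, HasDerivAt (fun s => N s i j) (N' i j) t)
    (k : ι) (l : ν) : HasDerivAt (fun s => (A * N s * B) k l) ((A * N' * B) k l) t := by
  simp only [mul_apply]
  exact .fun_sum fun j _ => (HasDerivAt.fun_sum fun i _ => (h i j).const_mul _).mul_const _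

lemma differentiableAt_mul_mul_apply {E : Type*} [NormedAddCommGroup E] [NormedSpace ℝ E]
    (A : Matrix ι κ ℝ) (B : Matrix μ ν ℝ) {N : E → Matrix κ μ ℝ} {x : E}
    (h : ∀ i j, DifferentiableAt ℝ (fun u => N u i j) x) (k : ι) (l : ν) :
    DifferentiableAt ℝ (fun u => (A * N u * B) k l) x := by
  simp only [mul_apply]
  fun_prop

variable [DecidableEq κ]

lemma hasDerivAt_weightedLap_apply {a : ℝ → κ → κ → ℝ} {a' : κ → κ → ℝ} {t : ℝ}
    (h : ∀ i j, HasDerivAt (fun s => a s i j) (a' i j) t) (i j : κ) :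
    HasDerivAt (fun s => weightedLap (a s) i j) (weightedLap a' i j) t := by
  simp only [weightedLap, Matrix.sub_apply, diagonal_apply, of_apply]
  split_ifs
  · exact (HasDerivAt.fun_sum fun k _ => h i k).sub (h i j)
  · exact (hasDerivAt_const t 0).sub (h i j)

lemma differentiableAt_weightedLap_apply {E : Type*} [NormedAddCommGroup E] [NormedSpace ℝ E]
    {a : E → κ → κ → ℝ} {x : E} (h : ∀ i j, DifferentiableAt ℝ (fun u => a u i j) x) (i j : κ) :
    DifferentiableAt ℝ (fun u => weightedLap (a u) i j) x := by
  simp only [weightedLap, Matrix.sub_apply, diagonal_apply, of_apply]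
  split_ifs <;> fun_prop

end EntryDerivatives

lemma sigmoid_pos (w y : ℝ) : 0 < sigmoid w y := by
  unfold sigmoid
  positivity

noncomputable def sigmoidDeriv (w y : ℝ) : ℝ := w * Real.exp (-w * y) / (1 + Real.exp (-w * y)) ^ 2

lemma sigmoidDeriv_pos {w : ℝ} (hw : 0 < w) (y : ℝ) : 0 < sigmoidDeriv w y := by
  unfold sigmoidDeriv
  positivity

lemma hasDerivAt_sigmoid (w y : ℝ) : HasDerivAt (sigmoid w) (sigmoidDeriv w y) y := by
  have hinner : HasDerivAt (fun y => 1 + Real.exp (-w * y)) (Real.exp (-w * y) * -w) y := by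
    simpa using ((hasDerivAt_id y).const_mul (-w)).exp.const_add 1
  have hsigmoid : sigmoid w = fun y => (1 + Real.exp (-w * y))⁻¹ := funext fun _ => one_div _
  rw [hsigmoid]
  exact (hinner.fun_inv (by positivity)).congr_deriv (by rw [sigmoidDeriv]; ring)

lemma hasDerivAt_norm_add_smul_self {E : Type*} [NormedAddCommGroup E] [NormedSpace ℝ E] (z : E) :
    HasDerivAt (fun t : ℝ => ‖z + t • z‖) ‖z‖ 0 := by
  have hlin : HasDerivAt (fun t : ℝ => (1 + t) * ‖z‖) ‖z‖ 0 := by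
    simpa using ((hasDerivAt_id (0 : ℝ)).const_add 1).mul_const ‖z‖
  refine hlin.congr_of_eventuallyEq (Filter.eventuallyEq_of_mem
    (Ioi_mem_nhds (by norm_num : (-1 : ℝ) < 0)) fun t (ht : -1 < t) => ?_)
  rw [show z + t • z = (1 + t) • z by rw [add_smul, one_smul], norm_smul,
    Real.norm_of_nonneg (by linarith)]

section Configuration

variable {n d : ℕ}

-- `lap w ε v` is by definition `weightedLap (sigmoidWeight w ε v)`.
noncomputable def sigmoidWeight (w ε : ℝ) (v : EuclideanSpace ℝ (Fin n × Fin d)) (i j : Fin n) :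
    ℝ :=
  if i = j then 0 else sigmoid w (ε - ‖pos v i - pos v j‖)

noncomputable def dilationRate (w ε : ℝ) (v : EuclideanSpace ℝ (Fin n × Fin d)) (i j : Fin n) :
    ℝ :=
  if i = j then 0 else sigmoidDeriv w (ε - ‖pos v i - pos v j‖) * ‖pos v i - pos v j‖

lemma sigmoidWeight_comm (w ε : ℝ) (v : EuclideanSpace ℝ (Fin n × Fin d)) (i j : Fin n) :
    sigmoidWeight w ε v i j = sigmoidWeight w ε v j i := by
  unfold sigmoidWeight
  split_ifs with h h' h' <;> simp_all [norm_sub_rev]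

lemma sigmoidWeight_pos (w ε : ℝ) (v : EuclideanSpace ℝ (Fin n × Fin d)) {i j : Fin n}
    (hij : i ≠ j) : 0 < sigmoidWeight w ε v i j := by
  simpa [sigmoidWeight, hij] using sigmoid_pos _ _

lemma dilationRate_comm (w ε : ℝ) (v : EuclideanSpace ℝ (Fin n × Fin d)) (i j : Fin n) :
    dilationRate w ε v i j = dilationRate w ε v j i := by
  unfold dilationRate
  split_ifs with h h' h' <;> simp_all [norm_sub_rev]

lemma dilationRate_pos {w : ℝ} (hw : 0 < w) (ε : ℝ) {v : EuclideanSpace ℝ (Fin n × Fin d)}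
    (hv : Function.Injective (pos v)) {i j : Fin n} (hij : i ≠ j) : 0 < dilationRate w ε v i j := by
  have hr : 0 < ‖pos v i - pos v j‖ := norm_pos_iff.mpr (sub_ne_zero.mpr (hv.ne hij))
  simp only [dilationRate, if_neg hij]
  exact mul_pos (sigmoidDeriv_pos hw _) hr

lemma hasDerivAt_sigmoidWeight_dilation (w ε : ℝ) (v : EuclideanSpace ℝ (Fin n × Fin d))
    (i j : Fin n) :
    HasDerivAt (fun t : ℝ => sigmoidWeight w ε (v + t • v) i j) (-dilationRate w ε v i j) 0 := by
  unfold sigmoidWeight dilationRate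
  split_ifs
  · simpa using hasDerivAt_const (0 : ℝ) (0 : ℝ)
  · have hpath : ∀ t : ℝ, pos (v + t • v) i - pos (v + t • v) j =
        (pos v i - pos v j) + t • (pos v i - pos v j) := fun t => by
      change pos v i + t • pos v i - (pos v j + t • pos v j) = _
      rw [smul_sub]
      abel
    simp only [hpath]
    generalize pos v i - pos v j = z
    have h := (hasDerivAt_sigmoid w (ε - ‖z + (0 : ℝ) • z‖)).comp (0 : ℝ)
      ((hasDerivAt_norm_add_smul_self z).const_sub ε)
    rw [zero_smul, add_zero] at h
    refine h.congr_deriv ?_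
    ring

lemma differentiableAt_sigmoidWeight (w ε : ℝ) {v : EuclideanSpace ℝ (Fin n × Fin d)}
    (hv : Function.Injective (pos v)) (i j : Fin n) :
    DifferentiableAt ℝ (fun u => sigmoidWeight w ε u i j) v := by
  unfold sigmoidWeight
  split_ifs with hij
  · exact differentiableAt_const 0
  · have hdiff : DifferentiableAt ℝ (fun u : EuclideanSpace ℝ (Fin n × Fin d) =>
        pos u i - pos u j) v :=
      differentiableAt_euclidean.mpr fun k => by
        simp only [pos, PiLp.sub_apply]
        exact (EuclideanSpace.proj (𝕜 := ℝ) (i, k)).differentiableAt.sub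
          (EuclideanSpace.proj (𝕜 := ℝ) (j, k)).differentiableAt
    have hnorm := hdiff.norm ℝ (sub_ne_zero.mpr (hv.ne hij))
    exact (hasDerivAt_sigmoid w _).differentiableAt.comp v (hnorm.const_sub ε)

end Configuration

lemma hasDerivAt_det_lap_dilation {n d : ℕ} {κ : Type*} [Fintype κ] [DecidableEq κ] (w ε : ℝ)
    (P : Matrix (Fin n) κ ℝ) (v : EuclideanSpace ℝ (Fin n × Fin d)) :
    HasDerivAt (fun t : ℝ => (Pᵀ * lap w ε (v + t • v) * P).det)
      (-(adjugate (Pᵀ * lap w ε v * P) * (Pᵀ * weightedLap (dilationRate w ε v) * P)).trace) 0 := by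
  have h := HasDerivAt.matrix_det (hasDerivAt_mul_mul_apply Pᵀ P
    (hasDerivAt_weightedLap_apply (hasDerivAt_sigmoidWeight_dilation w ε v)))
  rw [zero_smul, add_zero, weightedLap_neg, Matrix.mul_neg, Matrix.neg_mul, Matrix.mul_neg,
    trace_neg] at h
  exact h

lemma differentiableAt_det_lap {n d : ℕ} {κ : Type*} [Fintype κ] [DecidableEq κ] (w ε : ℝ)
    (P : Matrix (Fin n) κ ℝ) {v : EuclideanSpace ℝ (Fin n × Fin d)}
    (hv : Function.Injective (pos v)) :
    DifferentiableAt ℝ (fun u => (Pᵀ * lap w ε u * P).det) v :=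
  .matrix_det (differentiableAt_mul_mul_apply Pᵀ P
    (differentiableAt_weightedLap_apply (differentiableAt_sigmoidWeight w ε hv)))

lemma gradient_ne_zero_of_hasDerivAt_add_smul {F : Type*} [NormedAddCommGroup F]
    [InnerProductSpace ℝ F] [CompleteSpace F] {f : F → ℝ} {x y : F} {c : ℝ}
    (hf : DifferentiableAt ℝ f x) (hline : HasDerivAt (fun t : ℝ => f (x + t • y)) c 0)
    (hc : c ≠ 0) : gradient f x ≠ 0 := by
  intro hgrad
  have hfderiv : fderiv ℝ f x = 0 := by rw [← toDual_gradient, hgrad, map_zero]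
  have hpath : HasDerivAt (fun t : ℝ => x + t • y) y 0 := by
    simpa using ((hasDerivAt_id (0 : ℝ)).smul_const y).const_add x
  have hchain := hf.hasFDerivAt.comp_hasDerivAt_of_eq 0 hpath (by simp)
  rw [hfderiv, _root_.zero_apply] at hchain
  exact hc (hline.unique hchain)

theorem stmt10_general {n d : ℕ} (hn : 2 ≤ n) (w ε τ : ℝ) (hw : 0 < w)
    (P : Matrix (Fin n) (Fin (n - 1)) ℝ)
    (hortho : Pᵀ * P = 1) (hP1 : ∀ j, ∑ i, P i j = 0)
    (v : EuclideanSpace ℝ (Fin n × Fin d)) (hdist : Function.Injective (pos v)) :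
    gradient (fun u : EuclideanSpace ℝ (Fin n × Fin d) =>
        τ - (Pᵀ * lap w ε u * P).det) v ≠ 0 := by
  have : Nonempty (Fin (n - 1)) := ⟨⟨0, by omega⟩⟩
  have hP : Function.Injective P.mulVec := fun x y hxy => by
    simpa [mulVec_mulVec, hortho] using congrArg (Pᵀ *ᵥ ·) hxy
  have hM : (Pᵀ * lap w ε v * P).PosDef :=
    posDef_transpose_mul_weightedLap_mul (sigmoidWeight_comm w ε v)
      (fun _ _ => sigmoidWeight_pos w ε v) hP hP1
  have hB : (Pᵀ * weightedLap (dilationRate w ε v) * P).PosDef :=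
    posDef_transpose_mul_weightedLap_mul (dilationRate_comm w ε v)
      (fun _ _ => dilationRate_pos hw ε hdist) hP hP1
  refine gradient_ne_zero_of_hasDerivAt_add_smul
    ((differentiableAt_const τ).sub (differentiableAt_det_lap w ε P hdist))
    ((hasDerivAt_const 0 τ).sub (hasDerivAt_det_lap_dilation w ε P v)) ?_
  rw [zero_sub, neg_neg]
  exact (trace_adjugate_mul_pos_of_posDef hM hB).ne'

/-- for `g(x) = τ - det (Pᵀ L(x) P)` with `τ > 0`, distinct positions and `P` with
orthonormal columns orthogonal to the all-ones vector, `g(x) = 0` implies `∇g(x) ≠ 0`. -/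
theorem stmt10 {n d : ℕ} (hn : 2 ≤ n) (w ε τ : ℝ) (hw : 0 < w) (hε : 0 < ε) (hτ : 0 < τ)
    (P : Matrix (Fin n) (Fin (n - 1)) ℝ)
    (hortho : Pᵀ * P = 1) (hP1 : ∀ j, ∑ i, P i j = 0)
    (v : EuclideanSpace ℝ (Fin n × Fin d)) (hdist : Function.Injective (pos v))
    (hg : τ - (Pᵀ * lap w ε v * P).det = 0) :
    gradient (fun u : EuclideanSpace ℝ (Fin n × Fin d) =>
        τ - (Pᵀ * lap w ε u * P).det) v ≠ 0 :=
  stmt10_general hn w ε τ hw P hortho hP1 v hdist
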